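/- arXiv:0806.4864 — 3 statements merged into one kernel-verified Lean document; each statement's English description precedes it below -/
import Mathlib

section
/- Let C be a bivariate copula (so C(u₁,1) = u₁ and C(1,u₂) = u₂), let C_n be the empirical copula of the sample, and let j : I → ℝ be continuous and of bounded variation on I. Then | ∫_I j(u₁,u₂) d(C_n − C)(u₁,u₂) | ≤ 5 · sup_{u ∈ I} | C_n(u) − C(u) | · ∫_I d|j|. -/
open MeasureTheory ProbabilityTheory Filter Set Asymptotics
open scoped Topology ENNReal NNReal

noncomputable section

namespace Copula

/-- The unit square `I = [0,1]²`. -/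
def Isq : Set (ℝ × ℝ) := Icc (0:ℝ) 1 ×ˢ Icc (0:ℝ) 1

/-- The open unit square `(0,1)²`. -/
def IsqO : Set (ℝ × ℝ) := Ioo (0:ℝ) 1 ×ˢ Ioo (0:ℝ) 1

variable {d : ℕ}

/-- Partial derivative in the `ℓ`-th θ-coordinate. -/
def pdθ (f : (Fin d → ℝ) → ℝ) (ℓ : Fin d) (θ : Fin d → ℝ) : ℝ :=
  deriv (fun t => f (Function.update θ ℓ t)) (θ ℓ)

/-- Second partial derivative in θ-coordinates `ℓ, ℓ'`. -/
def pdθ2 (f : (Fin d → ℝ) → ℝ) (ℓ ℓ' : Fin d) (θ : Fin d → ℝ) : ℝ :=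
  pdθ (pdθ f ℓ') ℓ θ

/-- Third partial derivative in θ-coordinates. -/
def pdθ3 (f : (Fin d → ℝ) → ℝ) (ℓ ℓ' ℓ'' : Fin d) (θ : Fin d → ℝ) : ℝ :=
  pdθ (pdθ (pdθ f ℓ'') ℓ') ℓ θ

/-- Partial derivative in the first `u`-coordinate. -/
def pdU1 (f : ℝ × ℝ → ℝ) (u : ℝ × ℝ) : ℝ := deriv (fun t => f (t, u.2)) u.1

/-- Partial derivative in the second `u`-coordinate. -/
def pdU2 (f : ℝ × ℝ → ℝ) (u : ℝ × ℝ) : ℝ := deriv (fun t => f (u.1, t)) u.2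

variable (φ : ℝ → ℝ) (c : (Fin d → ℝ) → ℝ × ℝ → ℝ)

/-- `K₁(θ,u) = φ'(1/c_θ(u))`. -/
def K1 (θ : Fin d → ℝ) (u : ℝ × ℝ) : ℝ := deriv φ (1 / c θ u)

/-- `K₂(θ,u) = φ'(1/c_θ(u))/c_θ(u) - φ(1/c_θ(u))`. -/
def K2 (θ : Fin d → ℝ) (u : ℝ × ℝ) : ℝ :=
  deriv φ (1 / c θ u) / c θ u - φ (1 / c θ u)

/-- The dual criterion `m(θ,u) = ∫_I φ'(1/c_θ) dλ - K₂(θ,u)`. -/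
def mFun (θ : Fin d → ℝ) (u : ℝ × ℝ) : ℝ :=
  (∫ v in Isq, K1 φ c θ v) - K2 φ c θ u

/-- The enlarged parameter space `Θ_e`. -/
def ThetaE : Set (Fin d → ℝ) :=
  {θ | IntegrableOn (fun v => |K1 φ c θ v|) Isq volume}

/-- The c.d.f. `C_θ(u) = ∫_{[0,u₁]×[0,u₂]} c_θ dλ` of the copula with density `c_θ`. -/
def copCdf (θ : Fin d → ℝ) (u : ℝ × ℝ) : ℝ :=
  ∫ v in Icc (0:ℝ) u.1 ×ˢ Icc (0:ℝ) u.2, c θ v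

/-- Integral against the copula measure `dC_θ = c_θ dλ` on `I`. -/
def intC (θ : Fin d → ℝ) (f : ℝ × ℝ → ℝ) : ℝ := ∫ u in Isq, f u * c θ u

/-- The matrix `-∫_I (∂²/∂θ²) m(θ_T,·) dC_{θ_T}` (as a function of indices). -/
def SmatFun (θT : Fin d → ℝ) (ℓ ℓ' : Fin d) : ℝ :=
  -∫ u in Isq, pdθ2 (fun θ => mFun φ c θ u) ℓ ℓ' θT * c θT u

/-- The matrix `S` of Theorem 1. -/
def Smat (θT : Fin d → ℝ) : Matrix (Fin d) (Fin d) ℝ := Matrix.of (SmatFun φ c θT)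

section Empirical

variable {Ω : Type*} [MeasurableSpace Ω] (X : ℕ → Ω → ℝ × ℝ)

/-- Empirical marginal distribution function of the first coordinate. -/
def empF1 (n : ℕ) (ω : Ω) (t : ℝ) : ℝ :=
  (n : ℝ)⁻¹ * ∑ k ∈ Finset.range n, if (X k ω).1 ≤ t then 1 else 0

/-- Empirical marginal distribution function of the second coordinate. -/
def empF2 (n : ℕ) (ω : Ω) (t : ℝ) : ℝ :=
  (n : ℝ)⁻¹ * ∑ k ∈ Finset.range n, if (X k ω).2 ≤ t then 1 else 0

/-- The pseudo-observations `(F_{1n}(X_{1k}), F_{2n}(X_{2k}))`. -/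
def pseudoObs (n : ℕ) (ω : Ω) (k : ℕ) : ℝ × ℝ :=
  (empF1 X n ω (X k ω).1, empF2 X n ω (X k ω).2)

/-- Integral `∫_I f dC_n` against the (modified) empirical copula `C_n`, i.e. the
average of `f` over the pseudo-observations. -/
def intCn (f : ℝ × ℝ → ℝ) (n : ℕ) (ω : Ω) : ℝ :=
  (n : ℝ)⁻¹ * ∑ k ∈ Finset.range n, f (pseudoObs X n ω k)

/-- The (modified) empirical copula `C_n`. -/
def empCop (n : ℕ) (ω : Ω) (u : ℝ × ℝ) : ℝ :=
  (n : ℝ)⁻¹ * ∑ k ∈ Finset.range n,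
    if (pseudoObs X n ω k).1 ≤ u.1 ∧ (pseudoObs X n ω k).2 ≤ u.2 then 1 else 0


/-- The true copula of the sample: `C(u) = P(F₁(X₁) ≤ u₁, F₂(X₂) ≤ u₂)`. -/
def copOf (P : Measure Ω) (F1 F2 : ℝ → ℝ) (u : ℝ × ℝ) : ℝ :=
  (P {ω | F1 (X 0 ω).1 ≤ u.1 ∧ F2 (X 0 ω).2 ≤ u.2}).toReal

/-- Integral `∫_I j dC` of `j` against the true copula of the sample. -/
def intCop (P : Measure Ω) (F1 F2 : ℝ → ℝ) (j : ℝ × ℝ → ℝ) : ℝ :=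
  ∫ ω, j (F1 (X 0 ω).1, F2 (X 0 ω).2) ∂P

/-- The joint empirical distribution function `F_n`. -/
def empJoint (n : ℕ) (ω : Ω) (x : ℝ × ℝ) : ℝ :=
  (n : ℝ)⁻¹ * ∑ k ∈ Finset.range n, if (X k ω).1 ≤ x.1 ∧ (X k ω).2 ≤ x.2 then 1 else 0

/-- Empirical quantile function of the first margin. -/
def empQuant1 (n : ℕ) (ω : Ω) (t : ℝ) : ℝ := sInf {x : ℝ | t ≤ empF1 X n ω x}

/-- Empirical quantile function of the second margin. -/
def empQuant2 (n : ℕ) (ω : Ω) (t : ℝ) : ℝ := sInf {x : ℝ | t ≤ empF2 X n ω x}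

/-- The Deheuvels empirical copula `𝔻_n(u) = F_n(F_{1n}⁻¹(u₁), F_{2n}⁻¹(u₂))`. -/
def deheuvelsCop (n : ℕ) (ω : Ω) (u : ℝ × ℝ) : ℝ :=
  empJoint X n ω (empQuant1 X n ω u.1, empQuant2 X n ω u.2)

/-- The influence function of Theorem 1(2): `(∂/∂θ)m(θ_T,F₁(X₁),F₂(X₂)) + W₁ + W₂`. -/
def gVec (θT : Fin d → ℝ) (F1 F2 : ℝ → ℝ) (ω : Ω) (ℓ : Fin d) : ℝ :=
  pdθ (fun θ => mFun φ c θ (F1 (X 0 ω).1, F2 (X 0 ω).2)) ℓ θT +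
    (∫ u in Isq, (if F1 (X 0 ω).1 ≤ u.1 then (1:ℝ) else 0) *
      pdU1 (fun v => pdθ (fun θ => mFun φ c θ v) ℓ θT) u * c θT u) +
    (∫ u in Isq, (if F2 (X 0 ω).2 ≤ u.2 then (1:ℝ) else 0) *
      pdU2 (fun v => pdθ (fun θ => mFun φ c θ v) ℓ θT) u * c θT u)

/-- The covariance matrix `M` of Theorem 1(2) (as a function of indices). -/
def MmatFun (P : Measure Ω) (θT : Fin d → ℝ) (F1 F2 : ℝ → ℝ) (ℓ ℓ' : Fin d) : ℝ :=
  ∫ ω, (gVec φ c X θT F1 F2 ω ℓ - ∫ ω', gVec φ c X θT F1 F2 ω' ℓ ∂P) *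
    (gVec φ c X θT F1 F2 ω ℓ' - ∫ ω', gVec φ c X θT F1 F2 ω' ℓ' ∂P) ∂P

/-- The influence function of Theorem 2(2): `m(θ_T,F₁(X₁),F₂(X₂)) + Y₁ + Y₂`. -/
def mInf (θT : Fin d → ℝ) (F1 F2 : ℝ → ℝ) (ω : Ω) : ℝ :=
  mFun φ c θT (F1 (X 0 ω).1, F2 (X 0 ω).2) +
    (∫ u in Isq, (if F1 (X 0 ω).1 ≤ u.1 then (1:ℝ) else 0) * pdU1 (mFun φ c θT) u * c θT u) +
    (∫ u in Isq, (if F2 (X 0 ω).2 ≤ u.2 then (1:ℝ) else 0) * pdU2 (mFun φ c θT) u * c θT u)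

/-- The estimator `D̂_φ(θ₀,θ_T) = sup_{θ ∈ Θ_e} ∫_I m(θ,·) dC_n`. -/
def Dhat (n : ℕ) (ω : Ω) : ℝ :=
  sSup ((fun θ : Fin d → ℝ => intCn X (mFun φ c θ) n ω) '' ThetaE φ c)

end Empirical

/-- Convergence in distribution (weak convergence of the laws) of a sequence of
random elements to the law `ν`. -/
def ConvInDist {Ω E : Type*} [MeasurableSpace Ω] [MeasurableSpace E] [TopologicalSpace E]
    (P : Measure Ω) (Y : ℕ → Ω → E) (ν : Measure E) : Prop :=
  ∀ f : BoundedContinuousFunction E ℝ,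
    Tendsto (fun n => ∫ ω, f (Y n ω) ∂P) atTop (𝓝 (∫ x, f x ∂ν))

/-- `ν` is the centered Gaussian law on `ℝ^d` with covariance matrix `Σ`:
every linear functional is one-dimensional centered Gaussian with the induced variance. -/
def IsCenteredGaussianCov (ν : Measure (Fin d → ℝ)) (Cov : Fin d → Fin d → ℝ) : Prop :=
  IsProbabilityMeasure ν ∧
    ∀ a : Fin d → ℝ,
      ν.map (fun x => ∑ i, a i * x i) =
        gaussianReal 0 (Real.toNNReal (∑ i, ∑ j, a i * Cov i j * a j))

/-- The chi-squared law with `k` degrees of freedom, defined through its density. -/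
def chiSqMeasure (k : ℕ) : Measure ℝ :=
  (volume.restrict (Ioi (0:ℝ))).withDensity fun x =>
    ENNReal.ofReal
      (x ^ ((k : ℝ) / 2 - 1) * Real.exp (-x / 2) /
        (2 ^ ((k : ℝ) / 2) * Real.Gamma ((k : ℝ) / 2)))

/-- A u-shaped function on `(0,1)`. -/
def UShaped (r : ℝ → ℝ) : Prop :=
  (∀ t ∈ Ioo (0:ℝ) 1, 0 < r t) ∧ (∀ t ∈ Ioo (0:ℝ) 1, r (1 - t) = r t) ∧
    MonotoneOn r (Ioc (0:ℝ) (1/2))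

/-- `r_β` for a u-shaped `r`. -/
def rBeta (r : ℝ → ℝ) (β t : ℝ) : ℝ :=
  if t ≤ 1/2 then r (β * t) else r (1 - β * (1 - t))

/-- Reproducing u-shaped functions: the class `R`. -/
def Reproducing (r : ℝ → ℝ) : Prop :=
  UShaped r ∧ ∃ β₀ > (0:ℝ), ∀ β ∈ Ioo (0:ℝ) β₀, ∃ M : ℝ,
    ∀ t ∈ Ioo (0:ℝ) 1, rBeta r β t ≤ M * r t

/-- The class `Q`. -/
def ClassQ (q : ℝ → ℝ) : Prop :=
  ContinuousOn q (Icc 0 1) ∧ (∀ t ∈ Ioo (0:ℝ) 1, 0 < q t) ∧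
    (∀ t ∈ Icc (0:ℝ) 1, q (1 - t) = q t) ∧ MonotoneOn q (Icc (0:ℝ) (1/2)) ∧
    IntegrableOn (fun t => ((q t) ^ 2)⁻¹) (Icc (0:ℝ) 1) volume

/-- Condition (C.1): on a neighborhood of `θ_T` contained in `Θ_e`, the maps
`θ ↦ φ'(1/c_θ(u))` are twice differentiable in each θ-coordinate and the first and second
partial derivatives are dominated by λ-integrable functions. -/
def CondC1 (θT : Fin d → ℝ) : Prop :=
  ∃ N ∈ 𝓝 θT, N ⊆ ThetaE φ c ∧
    (∀ u ∈ Isq, ∀ θ ∈ N, ∀ ℓ : Fin d,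
      DifferentiableAt ℝ (fun t => K1 φ c (Function.update θ ℓ t) u) (θ ℓ) ∧
      ∀ ℓ' : Fin d,
        DifferentiableAt ℝ
          (fun t => pdθ (fun θ' => K1 φ c θ' u) ℓ' (Function.update θ ℓ t)) (θ ℓ)) ∧
    ∃ g1 g2 : ℝ × ℝ → ℝ, IntegrableOn g1 Isq volume ∧ IntegrableOn g2 Isq volume ∧
      ∀ θ ∈ N, ∀ u ∈ Isq, ∀ ℓ ℓ' : Fin d,
        |pdθ (fun θ' => K1 φ c θ' u) ℓ θ| ≤ g1 u ∧
        |pdθ2 (fun θ' => K1 φ c θ' u) ℓ ℓ' θ| ≤ g2 u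

/-- Condition (C.2). -/
def CondC2 (θT : Fin d → ℝ) : Prop :=
  ∃ N ∈ 𝓝 θT, ∃ r1 r2 rt1 rt2 q1 q2 : ℝ → ℝ,
    Reproducing r1 ∧ Reproducing r2 ∧ Reproducing rt1 ∧ Reproducing rt2 ∧
    ClassQ q1 ∧ ClassQ q2 ∧
    (∀ θ ∈ N, ∀ ℓ : Fin d,
      ContDiffOn ℝ 1 (fun u => pdθ (fun θ' => mFun φ c θ' u) ℓ θ) IsqO) ∧
    (∀ θ ∈ N, ∀ u ∈ IsqO,
      -- (i) |∂m/∂θ_ℓ| ≤ r₁(u₁)r₂(u₂) and |∂²m/∂θ_ℓ∂u_i| ≤ r̃_i(u_i)r_j(u_j)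
      (∀ ℓ : Fin d,
        |pdθ (fun θ' => mFun φ c θ' u) ℓ θ| ≤ r1 u.1 * r2 u.2 ∧
        |pdU1 (fun v => pdθ (fun θ' => mFun φ c θ' v) ℓ θ) u| ≤ rt1 u.1 * r2 u.2 ∧
        |pdU2 (fun v => pdθ (fun θ' => mFun φ c θ' v) ℓ θ) u| ≤ rt2 u.2 * r1 u.1) ∧
      -- (ii) m² and (iv) |m|
      ((mFun φ c θ u) ^ 2 ≤ rt1 u.1 * r2 u.2 ∧ (mFun φ c θ u) ^ 2 ≤ rt2 u.2 * r1 u.1) ∧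
      (|mFun φ c θ u| ≤ rt1 u.1 * r2 u.2 ∧ |mFun φ c θ u| ≤ rt2 u.2 * r1 u.1) ∧
      -- (iii) third θ-derivatives of K₂
      (∀ ℓ ℓ' ℓ'' : Fin d,
        |pdθ3 (fun θ' => K2 φ c θ' u) ℓ ℓ' ℓ'' θ| ≤ rt1 u.1 * r2 u.2 ∧
        |pdθ3 (fun θ' => K2 φ c θ' u) ℓ ℓ' ℓ'' θ| ≤ rt2 u.2 * r1 u.1) ∧
      -- (v) |∂m/∂θ_ℓ|² and |∂²m/∂θ_ℓ∂θ_ℓ'|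
      (∀ ℓ ℓ' : Fin d,
        ((pdθ (fun θ' => mFun φ c θ' u) ℓ θ) ^ 2 ≤ rt1 u.1 * r2 u.2 ∧
          (pdθ (fun θ' => mFun φ c θ' u) ℓ θ) ^ 2 ≤ rt2 u.2 * r1 u.1) ∧
        (|pdθ2 (fun θ' => mFun φ c θ' u) ℓ ℓ' θ| ≤ rt1 u.1 * r2 u.2 ∧
          |pdθ2 (fun θ' => mFun φ c θ' u) ℓ ℓ' θ| ≤ rt2 u.2 * r1 u.1)) ∧
      -- (vi) |∂m/∂u_i|
      (|pdU1 (mFun φ c θ) u| ≤ rt1 u.1 * r2 u.2 ∧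
        |pdU2 (mFun φ c θ) u| ≤ rt2 u.2 * r1 u.1)) ∧
    IntegrableOn (fun u => (r1 u.1 * r2 u.2) ^ 2 * c θT u) Isq volume ∧
    IntegrableOn (fun u => q1 u.1 * rt1 u.1 * r2 u.2 * c θT u) Isq volume ∧
    IntegrableOn (fun u => q2 u.2 * rt2 u.2 * r1 u.1 * c θT u) Isq volume

/-- Condition (C.3): nonsingularity of `∫_I (∂²/∂θ²)m(θ_T,·) dC_{θ_T}`. -/
def CondC3 (θT : Fin d → ℝ) : Prop := (Smat φ c θT).det ≠ 0

/-- A continuous function on `I` of bounded variation in the Hardy–Krause sense: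
it induces a finite signed Borel measure on `I` and its edge restrictions are of
bounded variation. -/
def HKBV (j : ℝ × ℝ → ℝ) : Prop :=
  (∃ μ : SignedMeasure (ℝ × ℝ),
    ∀ u ∈ Isq, j u = j (u.1, 0) + j (0, u.2) - j (0, 0) +
      μ (Ioc (0:ℝ) u.1 ×ˢ Ioc (0:ℝ) u.2)) ∧
  BoundedVariationOn (fun t => j (t, 1)) (Icc (0:ℝ) 1) ∧
  BoundedVariationOn (fun t => j (1, t)) (Icc (0:ℝ) 1)

/-- Condition (C.4): each component of `(∂/∂θ)m(θ_T,·)` is continuous and of bounded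
variation on `I`. -/
def CondC4 (θT : Fin d → ℝ) : Prop :=
  ∀ ℓ : Fin d,
    ContinuousOn (fun u => pdθ (fun θ => mFun φ c θ u) ℓ θT) Isq ∧
    HKBV (fun u => pdθ (fun θ => mFun φ c θ u) ℓ θT)

/-- Condition (C.5). -/
def CondC5 (θ0 θT : Fin d → ℝ) : Prop :=
  (∀ ℓ : Fin d, ∀ u ∈ IsqO,
    Tendsto (fun θ => pdU1 (fun v => pdθ (fun θ' => mFun φ c θ' v) ℓ θ) u)
      (𝓝 θ0) (𝓝 0) ∧
    Tendsto (fun θ => pdU2 (fun v => pdθ (fun θ' => mFun φ c θ' v) ℓ θ) u)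
      (𝓝 θ0) (𝓝 0)) ∧
  ∃ M1 > (0:ℝ), ∃ δ1 > (0:ℝ), ∃ N ∈ 𝓝 θ0, ∀ θ ∈ N, ∀ u ∈ IsqO, ∀ ℓ : Fin d,
    |pdU1 (fun v => pdθ (fun θ' => mFun φ c θ' v) ℓ θ) u * c θT u| <
      M1 * (u.1 * (1 - u.1)) ^ (-1.5 + δ1 : ℝ) * (u.2 * (1 - u.2)) ^ (0.5 + δ1 : ℝ) ∧
    |pdU2 (fun v => pdθ (fun θ' => mFun φ c θ' v) ℓ θ) u * c θT u| <
      M1 * (u.2 * (1 - u.2)) ^ (-1.5 + δ1 : ℝ) * (u.1 * (1 - u.1)) ^ (0.5 + δ1 : ℝ)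

end Copula

/-!
Both `C_n` and `C` are distribution functions of probability measures `κ₁, κ₂` on `I`, and
`S := sup_I |C_n - C|` bounds the difference of their masses of every closed lower orthant, hence
(by continuity from below) of every open one and, for the marginals, of every lower set of `ℝ`.
On `I` the function `j` splits as `j v = j (v₁, 1) + j (1, v₂) - j (1, 1) + μ ((v₁, 1] × (v₂, 1])`.
The edge terms are differences of monotone functions, and by the layer-cake formula the integral
of a monotone `g` is an integral of masses of the lower sets `{g < y}`; for the last term Fubini
turns `∫ μ((v, 1]) dκ(v)` into `∫ κ([0, w)) dμ(w)`. Each piece therefore moves by at most `S`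
times its share of the variation of `j`, which gives the bound even with the constant `1`.
-/

namespace Copula

section Measures

variable {α β : Type*} [MeasurableSpace α] [MeasurableSpace β]

theorem abs_measureReal_iUnion_sub_le {κ₁ κ₂ : Measure α} [IsFiniteMeasure κ₁]
    [IsFiniteMeasure κ₂] {E : ℕ → Set α} (hE : Monotone E) {S : ℝ}
    (hS : ∀ k, |κ₁.real (E k) - κ₂.real (E k)| ≤ S) :
    |κ₁.real (⋃ k, E k) - κ₂.real (⋃ k, E k)| ≤ S := by
  have h (κ : Measure α) [IsFiniteMeasure κ] :
      Tendsto (fun k => κ.real (E k)) atTop (𝓝 (κ.real (⋃ k, E k))) :=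
    (ENNReal.tendsto_toReal (measure_ne_top _ _)).comp (tendsto_measure_iUnion_atTop hE)
  exact le_of_tendsto ((h κ₁).sub (h κ₂)).abs (Eventually.of_forall hS)

theorem le_ciSup_abs_measureReal_sub {ι : Type*} {κ₁ κ₂ : Measure α} [IsProbabilityMeasure κ₁]
    [IsProbabilityMeasure κ₂] (A : ι → Set α) (i : ι) :
    |κ₁.real (A i) - κ₂.real (A i)| ≤ ⨆ i, |κ₁.real (A i) - κ₂.real (A i)| :=
  le_ciSup ⟨1, forall_mem_range.2 fun _ => abs_sub_le_of_nonneg_of_le measureReal_nonneg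
    measureReal_le_one measureReal_nonneg measureReal_le_one⟩ i

theorem abs_measureReal_Iic_sub_le_of_ae_mem_Icc {γ : Type*} [Lattice γ] [MeasurableSpace γ]
    {κ₁ κ₂ : Measure γ} {a b : γ} (hab : a ≤ b) (h₁ : ∀ᵐ v ∂κ₁, v ∈ Icc a b)
    (h₂ : ∀ᵐ v ∂κ₂, v ∈ Icc a b) {S : ℝ}
    (hS : ∀ u ∈ Icc a b, |κ₁.real (Iic u) - κ₂.real (Iic u)| ≤ S) (u : γ) :
    |κ₁.real (Iic u) - κ₂.real (Iic u)| ≤ S := by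
  by_cases hu : a ≤ u
  · have htrunc (κ : Measure γ) (hκ : ∀ᵐ v ∂κ, v ∈ Icc a b) :
        κ.real (Iic u) = κ.real (Iic (u ⊓ b)) :=
      measureReal_congr (hκ.mono fun v hv =>
        propext ⟨fun h => le_inf h hv.2, fun h => h.trans inf_le_left⟩)
    rw [htrunc κ₁ h₁, htrunc κ₂ h₂]
    exact hS _ ⟨le_inf hu hab, inf_le_right⟩
  · have hnull (κ : Measure γ) (hκ : ∀ᵐ v ∂κ, v ∈ Icc a b) : κ.real (Iic u) = 0 := by
      rw [measureReal_def, measure_eq_zero_iff_ae_notMem (s := Iic u) |>.2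
        (hκ.mono fun v hv hvu => hu (hv.1.trans hvu)), ENNReal.toReal_zero]
    rw [hnull κ₁ h₁, hnull κ₂ h₂, sub_zero, abs_zero]
    exact (abs_nonneg _).trans (hS a ⟨le_rfl, hab⟩)

theorem integrable_measureReal_slice_left (κ : Measure α) [IsFiniteMeasure κ] (ρ : Measure β)
    [IsFiniteMeasure ρ] {T : Set (α × β)} (hT : MeasurableSet T) :
    Integrable (fun v => ρ.real (Prod.mk v ⁻¹' T)) κ :=
  .of_bound (measurable_measure_prodMk_left hT).ennreal_toReal.aestronglyMeasurable
    (ρ.real univ) (ae_of_all _ fun _ => by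
      rw [Real.norm_of_nonneg measureReal_nonneg]; exact measureReal_mono (subset_univ _))

theorem integrable_measureReal_slice_right (κ : Measure α) [IsFiniteMeasure κ] (ρ : Measure β)
    [IsFiniteMeasure ρ] {T : Set (α × β)} (hT : MeasurableSet T) :
    Integrable (fun w => κ.real ((·, w) ⁻¹' T)) ρ :=
  .of_bound (measurable_measure_prodMk_right hT).ennreal_toReal.aestronglyMeasurable
    (κ.real univ) (ae_of_all _ fun _ => by
      rw [Real.norm_of_nonneg measureReal_nonneg]; exact measureReal_mono (subset_univ _))

theorem integral_measureReal_slice_left_eq (κ : Measure α) [IsFiniteMeasure κ] (ρ : Measure β)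
    [IsFiniteMeasure ρ] {T : Set (α × β)} (hT : MeasurableSet T) :
    ∫ v, ρ.real (Prod.mk v ⁻¹' T) ∂κ = ∫ w, κ.real ((·, w) ⁻¹' T) ∂ρ := by
  simp only [measureReal_def]
  rw [integral_toReal (measurable_measure_prodMk_left hT).aemeasurable
      (ae_of_all _ fun _ => measure_lt_top _ _),
    integral_toReal (measurable_measure_prodMk_right hT).aemeasurable
      (ae_of_all _ fun _ => measure_lt_top _ _),
    ← Measure.prod_apply hT, ← Measure.prod_apply_symm hT]

theorem abs_integral_measureReal_slice_sub_le {κ₁ κ₂ : Measure α} [IsFiniteMeasure κ₁]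
    [IsFiniteMeasure κ₂] (ρ : Measure β) [IsFiniteMeasure ρ] {T : Set (α × β)}
    (hT : MeasurableSet T) {S : ℝ}
    (hS : ∀ᵐ w ∂ρ, |κ₁.real ((·, w) ⁻¹' T) - κ₂.real ((·, w) ⁻¹' T)| ≤ S) :
    |∫ v, ρ.real (Prod.mk v ⁻¹' T) ∂κ₁ - ∫ v, ρ.real (Prod.mk v ⁻¹' T) ∂κ₂| ≤
      S * ρ.real univ := by
  rw [integral_measureReal_slice_left_eq κ₁ ρ hT, integral_measureReal_slice_left_eq κ₂ ρ hT,
    ← integral_sub (integrable_measureReal_slice_right κ₁ ρ hT)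
      (integrable_measureReal_slice_right κ₂ ρ hT)]
  exact norm_integral_le_of_norm_le_const (μ := ρ)
    (f := fun w => κ₁.real ((·, w) ⁻¹' T) - κ₂.real ((·, w) ⁻¹' T)) hS

end Measures

theorem _root_.IsLowerSet.eq_empty_or_univ_or_Iic_or_Iio {γ : Type*}
    [ConditionallyCompleteLinearOrder γ] {L : Set γ} (hL : IsLowerSet L) :
    L = ∅ ∨ L = univ ∨ ∃ a, L = Iic a ∨ L = Iio a := by
  rcases L.eq_empty_or_nonempty with rfl | hne
  · exact Or.inl rfl
  by_cases hbdd : BddAbove L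
  · refine Or.inr (Or.inr ⟨sSup L, ?_⟩)
    by_cases ha : sSup L ∈ L
    · exact Or.inl (Subset.antisymm (fun t ht => le_csSup hbdd ht) fun t ht => hL ht ha)
    · refine Or.inr (Subset.antisymm (fun t ht => ?_) fun t ht => ?_)
      · exact (le_csSup hbdd ht).lt_of_ne fun h => ha (h ▸ ht)
      · obtain ⟨b, hb, htb⟩ := exists_lt_of_lt_csSup hne ht
        exact hL htb.le hb
  · refine Or.inr (Or.inl (eq_univ_of_forall fun t => ?_))
    obtain ⟨b, hb, htb⟩ := not_bddAbove_iff.1 hbdd t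
    exact hL htb.le hb

section RealLine

theorem iUnion_Iic_sub_one_div (a : ℝ) : ⋃ k : ℕ, Iic (a - 1 / ((k : ℝ) + 1)) = Iio a :=
  iUnion_Iic_eq_Iio_of_lt_of_tendsto (F := atTop) (fun k => sub_lt_self a (by positivity))
    (by simpa using (tendsto_const_nhds (x := a)).sub tendsto_one_div_add_atTop_nhds_zero_nat)

theorem monotone_Iic_sub_one_div (a : ℝ) : Monotone fun k : ℕ => Iic (a - 1 / ((k : ℝ) + 1)) :=
  fun _ _ hkl => Iic_subset_Iic.2 <| sub_le_sub_left
    (one_div_le_one_div_of_le (by positivity) (by gcongr)) a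

variable {m₁ m₂ : Measure ℝ} {S : ℝ}

theorem abs_measureReal_Iio_sub_le [IsFiniteMeasure m₁] [IsFiniteMeasure m₂]
    (hS : ∀ t, |m₁.real (Iic t) - m₂.real (Iic t)| ≤ S) (a : ℝ) :
    |m₁.real (Iio a) - m₂.real (Iio a)| ≤ S := by
  rw [← iUnion_Iic_sub_one_div]
  exact abs_measureReal_iUnion_sub_le (monotone_Iic_sub_one_div a) fun _ => hS _

theorem abs_measureReal_sub_le_of_isLowerSet [IsProbabilityMeasure m₁] [IsProbabilityMeasure m₂]
    (hS : ∀ t, |m₁.real (Iic t) - m₂.real (Iic t)| ≤ S) {L : Set ℝ} (hL : IsLowerSet L) :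
    |m₁.real L - m₂.real L| ≤ S := by
  have hS0 : 0 ≤ S := (abs_nonneg _).trans (hS 0)
  obtain rfl | rfl | ⟨a, rfl | rfl⟩ := hL.eq_empty_or_univ_or_Iic_or_Iio
  · simpa using hS0
  · simpa using hS0
  · exact hS a
  · exact abs_measureReal_Iio_sub_le hS a

/-- Layer cake: `∫ g dm = b - ∫ λ((g t, b]) dm(t)`, and the other slices `{t | g t < y}` of
`{(t, y) | g t < y}` are lower sets. -/
theorem abs_integral_sub_le_of_monotone [IsProbabilityMeasure m₁] [IsProbabilityMeasure m₂]
    (hS : ∀ t, |m₁.real (Iic t) - m₂.real (Iic t)| ≤ S) {g : ℝ → ℝ} (hg : Monotone g)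
    {a b : ℝ} (hgab : ∀ t, g t ∈ Icc a b) :
    |∫ t, g t ∂m₁ - ∫ t, g t ∂m₂| ≤ S * (b - a) := by
  set ρ := volume.restrict (Ioc a b)
  set T : Set (ℝ × ℝ) := {p | g p.1 < p.2}
  have hT : MeasurableSet T := measurableSet_lt (hg.measurable.comp measurable_fst) measurable_snd
  have hslice (t : ℝ) : ρ.real (Prod.mk t ⁻¹' T) = b - g t := by
    rw [show Prod.mk t ⁻¹' T = Ioi (g t) from rfl, measureReal_restrict_apply measurableSet_Ioi,
      inter_comm, Ioc_inter_Ioi, max_eq_right (hgab t).1, Real.volume_real_Ioc_of_le (hgab t).2]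
  have hlayer (m : Measure ℝ) [IsProbabilityMeasure m] :
      ∫ t, g t ∂m = b - ∫ t, ρ.real (Prod.mk t ⁻¹' T) ∂m := by
    have hgint : Integrable g m := .of_mem_Icc a b hg.measurable.aemeasurable (ae_of_all _ hgab)
    simp only [hslice]
    rw [integral_sub (integrable_const b) hgint, integral_const, probReal_univ, one_smul,
      sub_sub_cancel]
  rw [hlayer m₁, hlayer m₂, sub_sub_sub_cancel_left, abs_sub_comm]
  calc _ ≤ S * ρ.real univ :=
        abs_integral_measureReal_slice_sub_le ρ hT (ae_of_all _ fun _ =>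
          abs_measureReal_sub_le_of_isLowerSet hS fun _ _ hst ht => (hg hst).trans_lt ht)
    _ = S * (b - a) := by
        rw [measureReal_restrict_apply_univ,
          Real.volume_real_Ioc_of_le ((hgab 0).1.trans (hgab 0).2)]

theorem _root_.BoundedVariationOn.exists_monotone_sub_eqOn {f : ℝ → ℝ} {a b : ℝ} (hab : a ≤ b)
    (hf : BoundedVariationOn f (Icc a b)) :
    ∃ P Q : ℝ → ℝ, Monotone P ∧ Monotone Q ∧ EqOn f (P - Q) (Icc a b) ∧
      (∀ t, P t ∈ Icc (P a) (P b)) ∧ (∀ t, Q t ∈ Icc (Q a) (Q b)) ∧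
      (P b - P a) + (Q b - Q a) = (eVariationOn f (Icc a b)).toReal := by
  obtain ⟨p, q, hp, hq, rfl, hvar⟩ :=
    hf.locallyBoundedVariationOn.exists_monotoneOn_sub_monotoneOn'
  set c : ℝ → ℝ := fun t => projIcc a b hab t
  have hc : ∀ t ∈ Icc a b, c t = t := fun t ht => congrArg Subtype.val (projIcc_of_mem hab ht)
  have hca : c a = a := hc a (left_mem_Icc.2 hab)
  have hcb : c b = b := hc b (right_mem_Icc.2 hab)
  have hmono {g : ℝ → ℝ} (hg : MonotoneOn g (Icc a b)) : Monotone (g ∘ c) :=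
    fun s t hst => hg (projIcc a b hab s).2 (projIcc a b hab t).2 (monotone_projIcc hab hst)
  have hrange {g : ℝ → ℝ} (hg : MonotoneOn g (Icc a b)) (t : ℝ) :
      (g ∘ c) t ∈ Icc ((g ∘ c) a) ((g ∘ c) b) := by
    simp only [Function.comp, hca, hcb]
    exact ⟨hg (left_mem_Icc.2 hab) (projIcc a b hab t).2 (projIcc a b hab t).2.1,
      hg (projIcc a b hab t).2 (right_mem_Icc.2 hab) (projIcc a b hab t).2.2⟩
  refine ⟨p ∘ c, q ∘ c, hmono hp, hmono hq, fun t ht => by simp [hc t ht], hrange hp,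
    hrange hq, ?_⟩
  simp only [Function.comp, hca, hcb]
  rw [hvar a (left_mem_Icc.2 hab) b (right_mem_Icc.2 hab), variationOnFromTo.eq_of_le _ _ hab,
    inter_self]

theorem _root_.BoundedVariationOn.integrable_of_ae_mem_Icc {m : Measure ℝ} [IsFiniteMeasure m]
    {f : ℝ → ℝ} {a b : ℝ} (hab : a ≤ b) (hf : BoundedVariationOn f (Icc a b))
    (hm : ∀ᵐ t ∂m, t ∈ Icc a b) : Integrable f m := by
  obtain ⟨P, Q, hP, hQ, hfPQ, hPab, hQab, -⟩ := hf.exists_monotone_sub_eqOn hab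
  refine ((Integrable.of_mem_Icc _ _ hP.measurable.aemeasurable (ae_of_all _ hPab)).sub
    (Integrable.of_mem_Icc _ _ hQ.measurable.aemeasurable (ae_of_all _ hQab))).congr ?_
  filter_upwards [hm] with t ht using (hfPQ ht).symm

theorem abs_integral_sub_le_of_boundedVariationOn [IsProbabilityMeasure m₁]
    [IsProbabilityMeasure m₂] (hS : ∀ t, |m₁.real (Iic t) - m₂.real (Iic t)| ≤ S)
    {f : ℝ → ℝ} {a b : ℝ} (hab : a ≤ b) (hf : BoundedVariationOn f (Icc a b))
    (h₁ : ∀ᵐ t ∂m₁, t ∈ Icc a b) (h₂ : ∀ᵐ t ∂m₂, t ∈ Icc a b) :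
    |∫ t, f t ∂m₁ - ∫ t, f t ∂m₂| ≤ S * (eVariationOn f (Icc a b)).toReal := by
  obtain ⟨P, Q, hP, hQ, hfPQ, hPab, hQab, hvar⟩ := hf.exists_monotone_sub_eqOn hab
  have hsplit (m : Measure ℝ) [IsProbabilityMeasure m] (hm : ∀ᵐ t ∂m, t ∈ Icc a b) :
      ∫ t, f t ∂m = ∫ t, P t ∂m - ∫ t, Q t ∂m := by
    rw [← integral_sub (.of_mem_Icc _ _ hP.measurable.aemeasurable (ae_of_all _ hPab))
      (.of_mem_Icc _ _ hQ.measurable.aemeasurable (ae_of_all _ hQab))]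
    refine integral_congr_ae ?_
    filter_upwards [hm] with t ht using hfPQ ht
  rw [hsplit m₁ h₁, hsplit m₂ h₂, ← hvar, mul_add]
  calc _ = |(∫ t, P t ∂m₁ - ∫ t, P t ∂m₂) - (∫ t, Q t ∂m₁ - ∫ t, Q t ∂m₂)| := by ring_nf
    _ ≤ |∫ t, P t ∂m₁ - ∫ t, P t ∂m₂| + |∫ t, Q t ∂m₁ - ∫ t, Q t ∂m₂| := abs_sub _ _
    _ ≤ _ := add_le_add (abs_integral_sub_le_of_monotone hS hP hPab)
        (abs_integral_sub_le_of_monotone hS hQ hQab)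

end RealLine

section UnitSquare

theorem measurableSet_Isq : MeasurableSet Isq := measurableSet_Icc.prod measurableSet_Icc

theorem abs_measureReal_Iio_prod_Iio_sub_le {κ₁ κ₂ : Measure (ℝ × ℝ)} [IsFiniteMeasure κ₁]
    [IsFiniteMeasure κ₂] {S : ℝ} (hS : ∀ u, |κ₁.real (Iic u) - κ₂.real (Iic u)| ≤ S)
    (w : ℝ × ℝ) : |κ₁.real (Iio w.1 ×ˢ Iio w.2) - κ₂.real (Iio w.1 ×ˢ Iio w.2)| ≤ S := by
  rw [← iUnion_Iic_sub_one_div w.1, ← iUnion_Iic_sub_one_div w.2,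
    ← iUnion_prod_of_monotone (monotone_Iic_sub_one_div _) (monotone_Iic_sub_one_div _)]
  refine abs_measureReal_iUnion_sub_le (fun _ _ hkl => prod_mono
    (monotone_Iic_sub_one_div _ hkl) (monotone_Iic_sub_one_div _ hkl)) fun _ => ?_
  rw [Iic_prod_Iic]
  exact hS _

theorem _root_.MeasureTheory.VectorMeasure.apply_Ioc_prod_Ioc_eq {M : Type*} [AddCommGroup M]
    [TopologicalSpace M] [T2Space M] (μ : VectorMeasure (ℝ × ℝ) M) {a x b c y d : ℝ}
    (hax : a ≤ x) (hxb : x ≤ b) (hcy : c ≤ y) (hyd : y ≤ d) :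
    μ (Ioc x b ×ˢ Ioc y d) = μ (Ioc a b ×ˢ Ioc c d) - μ (Ioc a x ×ˢ Ioc c d) -
      μ (Ioc a b ×ˢ Ioc c y) + μ (Ioc a x ×ˢ Ioc c y) := by
  have hadd {s s' t t' : Set ℝ} (hs : Disjoint s s' ∨ Disjoint t t') (ms : MeasurableSet s)
      (ms' : MeasurableSet s') (mt : MeasurableSet t) (mt' : MeasurableSet t') :
      μ (s ×ˢ t ∪ s' ×ˢ t') = μ (s ×ˢ t) + μ (s' ×ˢ t') :=
    VectorMeasure.of_union (hs.elim (·.set_prod_left t t') (·.set_prod_right s s'))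
      (ms.prod mt) (ms'.prod mt')
  have mAx : MeasurableSet (Ioc a x) := measurableSet_Ioc
  have mxb : MeasurableSet (Ioc x b) := measurableSet_Ioc
  have mcy : MeasurableSet (Ioc c y) := measurableSet_Ioc
  have myd : MeasurableSet (Ioc y d) := measurableSet_Ioc
  have hx : Disjoint (Ioc a x) (Ioc x b) := Ioc_disjoint_Ioc_of_le le_rfl
  have hy : Disjoint (Ioc c y) (Ioc y d) := Ioc_disjoint_Ioc_of_le le_rfl
  rw [← Ioc_union_Ioc_eq_Ioc hax hxb, ← Ioc_union_Ioc_eq_Ioc hcy hyd]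
  have h₁ := hadd (.inr hy) mAx mAx mcy myd
  have h₂ := hadd (.inr hy) mxb mxb mcy myd
  have h₃ := hadd (.inl hx) mAx mxb mcy mcy
  have h₄ := hadd (.inl hx) mAx mxb (mcy.union myd) (mcy.union myd)
  rw [← prod_union] at h₁ h₂
  rw [← union_prod] at h₃ h₄
  rw [h₄, h₁, h₂, h₃]
  abel

def bothLt : Set ((ℝ × ℝ) × (ℝ × ℝ)) := {p | p.1.1 < p.2.1 ∧ p.1.2 < p.2.2}

theorem measurableSet_bothLt : MeasurableSet bothLt :=
  (measurableSet_lt (measurable_fst.comp measurable_fst)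
    (measurable_fst.comp measurable_snd)).inter
  (measurableSet_lt (measurable_snd.comp measurable_fst) (measurable_snd.comp measurable_snd))

theorem measureReal_Ioc_prod_Ioc_eq_restrict (ρ : Measure (ℝ × ℝ)) {v : ℝ × ℝ} (hv : v ∈ Isq) :
    ρ.real (Ioc v.1 1 ×ˢ Ioc v.2 1) = (ρ.restrict Isq).real (Prod.mk v ⁻¹' bothLt) := by
  have hIoc {t : ℝ} (ht : 0 ≤ t) : Ioi t ∩ Icc 0 1 = Ioc t 1 := by
    ext s
    simp only [mem_inter_iff, mem_Ioi, mem_Icc, mem_Ioc]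
    exact ⟨fun h => ⟨h.1, h.2.2⟩, fun h => ⟨h.1, ht.trans h.1.le, h.2⟩⟩
  rw [measureReal_restrict_apply (measurableSet_bothLt.preimage measurable_prodMk_left),
    show Prod.mk v ⁻¹' bothLt = Ioi v.1 ×ˢ Ioi v.2 from rfl, Isq, prod_inter_prod,
    hIoc hv.1.1, hIoc hv.2.1]

theorem integrable_measureReal_Ioc_prod_Ioc {κ : Measure (ℝ × ℝ)} [IsFiniteMeasure κ]
    (hκ : ∀ᵐ v ∂κ, v ∈ Isq) (ρ : Measure (ℝ × ℝ)) [IsFiniteMeasure ρ] :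
    Integrable (fun v => ρ.real (Ioc v.1 1 ×ˢ Ioc v.2 1)) κ :=
  (integrable_measureReal_slice_left κ (ρ.restrict Isq) measurableSet_bothLt).congr
    (hκ.mono fun _ hv => (measureReal_Ioc_prod_Ioc_eq_restrict ρ hv).symm)

theorem abs_integral_measureReal_Ioc_prod_Ioc_sub_le {κ₁ κ₂ : Measure (ℝ × ℝ)}
    [IsFiniteMeasure κ₁] [IsFiniteMeasure κ₂] (h₁ : ∀ᵐ v ∂κ₁, v ∈ Isq)
    (h₂ : ∀ᵐ v ∂κ₂, v ∈ Isq) {S : ℝ} (hS : ∀ u, |κ₁.real (Iic u) - κ₂.real (Iic u)| ≤ S)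
    (ρ : Measure (ℝ × ℝ)) [IsFiniteMeasure ρ] :
    |∫ v, ρ.real (Ioc v.1 1 ×ˢ Ioc v.2 1) ∂κ₁ - ∫ v, ρ.real (Ioc v.1 1 ×ˢ Ioc v.2 1) ∂κ₂| ≤
      S * ρ.real Isq := by
  have hrestrict (κ : Measure (ℝ × ℝ)) (hκ : ∀ᵐ v ∂κ, v ∈ Isq) :
      ∫ v, ρ.real (Ioc v.1 1 ×ˢ Ioc v.2 1) ∂κ =
        ∫ v, (ρ.restrict Isq).real (Prod.mk v ⁻¹' bothLt) ∂κ :=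
    integral_congr_ae (hκ.mono fun _ hv => measureReal_Ioc_prod_Ioc_eq_restrict ρ hv)
  rw [hrestrict κ₁ h₁, hrestrict κ₂ h₂, ← measureReal_restrict_apply_univ]
  exact abs_integral_measureReal_slice_sub_le _ measurableSet_bothLt
    (ae_of_all _ (abs_measureReal_Iio_prod_Iio_sub_le hS))

variable {κ : Measure (ℝ × ℝ)}

theorem ae_mem_Icc_fst (hκ : ∀ᵐ v ∂κ, v ∈ Isq) : ∀ᵐ t ∂κ.fst, t ∈ Icc (0:ℝ) 1 :=
  (ae_map_iff measurable_fst.aemeasurable measurableSet_Icc).2 (hκ.mono fun _ hv => hv.1)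

theorem ae_mem_Icc_snd (hκ : ∀ᵐ v ∂κ, v ∈ Isq) : ∀ᵐ t ∂κ.snd, t ∈ Icc (0:ℝ) 1 :=
  (ae_map_iff measurable_snd.aemeasurable measurableSet_Icc).2 (hκ.mono fun _ hv => hv.2)

theorem measureReal_fst_Iic (hκ : ∀ᵐ v ∂κ, v ∈ Isq) (t : ℝ) :
    κ.fst.real (Iic t) = κ.real (Iic (t, 1)) := by
  rw [Measure.fst, map_measureReal_apply measurable_fst measurableSet_Iic]
  exact measureReal_congr (hκ.mono fun v hv => propext ⟨fun h => ⟨h, hv.2.2⟩, fun h => h.1⟩)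

theorem measureReal_snd_Iic (hκ : ∀ᵐ v ∂κ, v ∈ Isq) (t : ℝ) :
    κ.snd.real (Iic t) = κ.real (Iic (1, t)) := by
  rw [Measure.snd, map_measureReal_apply measurable_snd measurableSet_Iic]
  exact measureReal_congr (hκ.mono fun v hv => propext ⟨fun h => ⟨hv.1.2, h⟩, fun h => h.2⟩)

end UnitSquare

section HardyKrause

variable {j : ℝ × ℝ → ℝ} {μ : SignedMeasure (ℝ × ℝ)} {κ : Measure (ℝ × ℝ)}

theorem eq_add_apply_Ioc_prod_Ioc
    (hjμ : ∀ u ∈ Isq, j u = j (u.1, 0) + j (0, u.2) - j (0, 0) +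
      μ (Ioc (0:ℝ) u.1 ×ˢ Ioc (0:ℝ) u.2)) {v : ℝ × ℝ} (hv : v ∈ Isq) :
    j v = j (v.1, 1) + j (1, v.2) - j (1, 1) + μ (Ioc v.1 1 ×ˢ Ioc v.2 1) := by
  have h1 : (1:ℝ) ∈ Icc (0:ℝ) 1 := right_mem_Icc.2 zero_le_one
  have := hjμ v hv
  have := hjμ (v.1, 1) ⟨hv.1, h1⟩
  have := hjμ (1, v.2) ⟨h1, hv.2⟩
  have := hjμ (1, 1) ⟨h1, h1⟩
  have := μ.apply_Ioc_prod_Ioc_eq hv.1.1 hv.1.2 hv.2.1 hv.2.2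
  dsimp only at *
  linarith

theorem ae_eq_edges_add_posPart_sub_negPart (hκ : ∀ᵐ v ∂κ, v ∈ Isq)
    (hjμ : ∀ u ∈ Isq, j u = j (u.1, 0) + j (0, u.2) - j (0, 0) +
      μ (Ioc (0:ℝ) u.1 ×ˢ Ioc (0:ℝ) u.2)) :
    j =ᵐ[κ] fun v => j (v.1, 1) + j (1, v.2) - j (1, 1) +
      (μ.toJordanDecomposition.posPart.real (Ioc v.1 1 ×ˢ Ioc v.2 1) -
        μ.toJordanDecomposition.negPart.real (Ioc v.1 1 ×ˢ Ioc v.2 1)) :=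
  hκ.mono fun _ hv => by
    rw [eq_add_apply_Ioc_prod_Ioc hjμ hv,
      μ.apply_eq_posPart_real_sub_negPart_real (measurableSet_Ioc.prod measurableSet_Ioc)]

theorem integrable_of_hardyKrause [IsFiniteMeasure κ] (hκ : ∀ᵐ v ∂κ, v ∈ Isq)
    (hjμ : ∀ u ∈ Isq, j u = j (u.1, 0) + j (0, u.2) - j (0, 0) +
      μ (Ioc (0:ℝ) u.1 ×ˢ Ioc (0:ℝ) u.2))
    (hBV1 : BoundedVariationOn (fun t => j (t, 1)) (Icc (0:ℝ) 1))
    (hBV2 : BoundedVariationOn (fun t => j (1, t)) (Icc (0:ℝ) 1)) :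
    Integrable j κ := by
  have h₁ := (hBV1.integrable_of_ae_mem_Icc zero_le_one (ae_mem_Icc_fst hκ)).comp_measurable
    measurable_fst
  have h₂ := (hBV2.integrable_of_ae_mem_Icc zero_le_one (ae_mem_Icc_snd hκ)).comp_measurable
    measurable_snd
  exact (((h₁.add h₂).sub (integrable_const _)).add
    ((integrable_measureReal_Ioc_prod_Ioc hκ _).sub (integrable_measureReal_Ioc_prod_Ioc hκ _))
    ).congr (ae_eq_edges_add_posPart_sub_negPart hκ hjμ).symm

theorem integral_eq_of_hardyKrause [IsProbabilityMeasure κ] (hκ : ∀ᵐ v ∂κ, v ∈ Isq)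
    (hjμ : ∀ u ∈ Isq, j u = j (u.1, 0) + j (0, u.2) - j (0, 0) +
      μ (Ioc (0:ℝ) u.1 ×ˢ Ioc (0:ℝ) u.2))
    (hBV1 : BoundedVariationOn (fun t => j (t, 1)) (Icc (0:ℝ) 1))
    (hBV2 : BoundedVariationOn (fun t => j (1, t)) (Icc (0:ℝ) 1)) :
    ∫ v, j v ∂κ = ∫ t, j (t, 1) ∂κ.fst + ∫ t, j (1, t) ∂κ.snd - j (1, 1) +
      (∫ v, μ.toJordanDecomposition.posPart.real (Ioc v.1 1 ×ˢ Ioc v.2 1) ∂κ -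
        ∫ v, μ.toJordanDecomposition.negPart.real (Ioc v.1 1 ×ˢ Ioc v.2 1) ∂κ) := by
  have h₁ := hBV1.integrable_of_ae_mem_Icc zero_le_one (ae_mem_Icc_fst hκ)
  have h₂ := hBV2.integrable_of_ae_mem_Icc zero_le_one (ae_mem_Icc_snd hκ)
  set p := μ.toJordanDecomposition.posPart
  set q := μ.toJordanDecomposition.negPart
  have e₁ : Integrable (fun v : ℝ × ℝ => j (v.1, 1)) κ := h₁.comp_measurable measurable_fst
  have e₂ : Integrable (fun v : ℝ × ℝ => j (1, v.2)) κ := h₂.comp_measurable measurable_snd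
  have e₁₂ : Integrable (fun v : ℝ × ℝ => j (v.1, 1) + j (1, v.2)) κ := e₁.add e₂
  have e₁₂c : Integrable (fun v : ℝ × ℝ => j (v.1, 1) + j (1, v.2) - j (1, 1)) κ :=
    e₁₂.sub (integrable_const _)
  have hp := integrable_measureReal_Ioc_prod_Ioc hκ p
  have hq := integrable_measureReal_Ioc_prod_Ioc hκ q
  have hpq : Integrable (fun v : ℝ × ℝ =>
      p.real (Ioc v.1 1 ×ˢ Ioc v.2 1) - q.real (Ioc v.1 1 ×ˢ Ioc v.2 1)) κ := hp.sub hq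
  rw [integral_congr_ae (ae_eq_edges_add_posPart_sub_negPart hκ hjμ), integral_add e₁₂c hpq,
    integral_sub e₁₂ (integrable_const _), integral_add e₁ e₂, integral_sub hp hq,
    integral_const, probReal_univ, one_smul,
    ← integral_map measurable_fst.aemeasurable h₁.aestronglyMeasurable,
    ← integral_map measurable_snd.aemeasurable h₂.aestronglyMeasurable]
  rfl

theorem abs_integral_sub_le_of_hardyKrause {κ₁ κ₂ : Measure (ℝ × ℝ)} [IsProbabilityMeasure κ₁]
    [IsProbabilityMeasure κ₂] (h₁ : ∀ᵐ v ∂κ₁, v ∈ Isq) (h₂ : ∀ᵐ v ∂κ₂, v ∈ Isq) {S : ℝ}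
    (hS : ∀ u ∈ Isq, |κ₁.real (Iic u) - κ₂.real (Iic u)| ≤ S)
    (hjμ : ∀ u ∈ Isq, j u = j (u.1, 0) + j (0, u.2) - j (0, 0) +
      μ (Ioc (0:ℝ) u.1 ×ˢ Ioc (0:ℝ) u.2))
    (hBV1 : BoundedVariationOn (fun t => j (t, 1)) (Icc (0:ℝ) 1))
    (hBV2 : BoundedVariationOn (fun t => j (1, t)) (Icc (0:ℝ) 1)) :
    |∫ v, j v ∂κ₁ - ∫ v, j v ∂κ₂| ≤
      S * ((μ.totalVariation Isq).toReal +
        (eVariationOn (fun t => j (t, 1)) (Icc (0:ℝ) 1)).toReal +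
        (eVariationOn (fun t => j (1, t)) (Icc (0:ℝ) 1)).toReal) := by
  have hS' : ∀ u, |κ₁.real (Iic u) - κ₂.real (Iic u)| ≤ S := by
    rw [Isq, Icc_prod_Icc] at h₁ h₂ hS
    exact abs_measureReal_Iic_sub_le_of_ae_mem_Icc (by norm_num) h₁ h₂ hS
  have hfst := abs_integral_sub_le_of_boundedVariationOn
    (fun t => by rw [measureReal_fst_Iic h₁, measureReal_fst_Iic h₂]; exact hS' _)
    zero_le_one hBV1 (ae_mem_Icc_fst h₁) (ae_mem_Icc_fst h₂)
  have hsnd := abs_integral_sub_le_of_boundedVariationOn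
    (fun t => by rw [measureReal_snd_Iic h₁, measureReal_snd_Iic h₂]; exact hS' _)
    zero_le_one hBV2 (ae_mem_Icc_snd h₁) (ae_mem_Icc_snd h₂)
  have hpos := abs_integral_measureReal_Ioc_prod_Ioc_sub_le h₁ h₂ hS'
    μ.toJordanDecomposition.posPart
  have hneg := abs_integral_measureReal_Ioc_prod_Ioc_sub_le h₁ h₂ hS'
    μ.toJordanDecomposition.negPart
  have hTV : (μ.totalVariation Isq).toReal = μ.toJordanDecomposition.posPart.real Isq +
      μ.toJordanDecomposition.negPart.real Isq := by
    rw [SignedMeasure.totalVariation, Measure.add_apply,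
      ENNReal.toReal_add (measure_ne_top _ _) (measure_ne_top _ _)]
    rfl
  have habs (a₁ a₂ b₁ b₂ c p₁ p₂ q₁ q₂ : ℝ) :
      |a₁ + b₁ - c + (p₁ - q₁) - (a₂ + b₂ - c + (p₂ - q₂))| ≤
        |a₁ - a₂| + |b₁ - b₂| + |p₁ - p₂| + |q₁ - q₂| :=
    calc _ = |(a₁ - a₂) + (b₁ - b₂) + ((p₁ - p₂) - (q₁ - q₂))| := by ring_nf
      _ ≤ |a₁ - a₂| + |b₁ - b₂| + |(p₁ - p₂) - (q₁ - q₂)| := abs_add_three _ _ _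
      _ ≤ _ := by linarith [abs_sub (p₁ - p₂) (q₁ - q₂)]
  rw [integral_eq_of_hardyKrause h₁ hjμ hBV1 hBV2, integral_eq_of_hardyKrause h₂ hjμ hBV1 hBV2,
    hTV]
  refine (habs ..).trans ?_
  linarith

end HardyKrause

section Empirical

variable {α : Type*} [MeasurableSpace α]

def empiricalMeasure (x : ℕ → α) (n : ℕ) : Measure α :=
  (n : ℝ≥0∞)⁻¹ • ∑ k ∈ Finset.range n, Measure.dirac (x k)

theorem isProbabilityMeasure_empiricalMeasure (x : ℕ → α) {n : ℕ} (hn : n ≠ 0) :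
    IsProbabilityMeasure (empiricalMeasure x n) := by
  constructor
  simp only [empiricalMeasure, Measure.smul_apply, Measure.finsetSum_apply, measure_univ,
    Finset.sum_const, Finset.card_range, nsmul_eq_mul, mul_one, smul_eq_mul]
  exact ENNReal.inv_mul_cancel (Nat.cast_ne_zero.2 hn) (ENNReal.natCast_ne_top n)

theorem empiricalMeasure_real_apply (x : ℕ → α) (n : ℕ) {s : Set α} (hs : MeasurableSet s) :
    (empiricalMeasure x n).real s = (n : ℝ)⁻¹ * ∑ k ∈ Finset.range n, s.indicator 1 (x k) := by
  simp only [measureReal_def, empiricalMeasure, Measure.smul_apply, Measure.finsetSum_apply,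
    Measure.dirac_apply' _ hs, smul_eq_mul, ENNReal.toReal_mul, ENNReal.toReal_inv,
    ENNReal.toReal_natCast]
  rw [ENNReal.toReal_sum fun k _ => by by_cases h : x k ∈ s <;> simp [h]]
  exact congrArg _ (Finset.sum_congr rfl fun k _ => by by_cases h : x k ∈ s <;> simp [h])

theorem ae_empiricalMeasure_mem (x : ℕ → α) (n : ℕ) {s : Set α} (hs : MeasurableSet s)
    (hx : ∀ k, x k ∈ s) : ∀ᵐ v ∂empiricalMeasure x n, v ∈ s := by
  rw [ae_iff]
  change empiricalMeasure x n sᶜ = 0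
  simp [empiricalMeasure, Measure.dirac_apply' _ hs.compl, hx]

theorem integral_empiricalMeasure [MeasurableSingletonClass α] (x : ℕ → α) (n : ℕ)
    (f : α → ℝ) : ∫ v, f v ∂empiricalMeasure x n = (n : ℝ)⁻¹ * ∑ k ∈ Finset.range n, f (x k) := by
  rw [empiricalMeasure, integral_smul_measure,
    integral_finsetSum_measure fun k _ => integrable_dirac enorm_lt_top]
  simp [integral_dirac]

end Empirical

section Sample

variable {Ω : Type*}

theorem inv_mul_sum_boole_mem_Icc (n : ℕ) (p : ℕ → Prop) [DecidablePred p] :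
    (n : ℝ)⁻¹ * ∑ k ∈ Finset.range n, (if p k then 1 else 0) ∈ Icc (0:ℝ) 1 := by
  rw [Finset.sum_boole]
  exact ⟨by positivity, inv_mul_le_one_of_le₀
    (by exact_mod_cast (Finset.card_filter_le _ _).trans (Finset.card_range n).le)
    (Nat.cast_nonneg _)⟩

theorem pseudoObs_mem_Isq (X : ℕ → Ω → ℝ × ℝ) (n : ℕ) (ω : Ω) (k : ℕ) :
    pseudoObs X n ω k ∈ Isq :=
  ⟨inv_mul_sum_boole_mem_Icc _ _, inv_mul_sum_boole_mem_Icc _ _⟩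

theorem empCop_eq_measureReal (X : ℕ → Ω → ℝ × ℝ) (n : ℕ) (ω : Ω) (u : ℝ × ℝ) :
    empCop X n ω u = (empiricalMeasure (pseudoObs X n ω) n).real (Iic u) := by
  rw [empiricalMeasure_real_apply _ _ measurableSet_Iic, empCop]
  refine congrArg _ (Finset.sum_congr rfl fun k _ => ?_)
  simp [indicator_apply, Prod.le_def]

theorem intCn_eq_integral (X : ℕ → Ω → ℝ × ℝ) (f : ℝ × ℝ → ℝ) (n : ℕ) (ω : Ω) :
    intCn X f n ω = ∫ v, f v ∂empiricalMeasure (pseudoObs X n ω) n :=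
  (integral_empiricalMeasure _ _ _).symm

variable {_ : MeasurableSpace Ω} {P : Measure Ω}

theorem monotone_of_measure_le_eq [IsFiniteMeasure P] {Y : Ω → ℝ} {F : ℝ → ℝ}
    (hF : ∀ t, (P {ω | Y ω ≤ t}).toReal = F t) : Monotone F := fun s t hst => by
  rw [← hF, ← hF]
  exact measureReal_mono fun ω (h : Y ω ≤ s) => h.trans hst

theorem mem_Icc_of_measure_le_eq [IsProbabilityMeasure P] {Y : Ω → ℝ} {F : ℝ → ℝ}
    (hF : ∀ t, (P {ω | Y ω ≤ t}).toReal = F t) (t : ℝ) : F t ∈ Icc (0:ℝ) 1 :=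
  hF t ▸ ⟨measureReal_nonneg, measureReal_le_one⟩

variable {X : ℕ → Ω → ℝ × ℝ} {F1 F2 : ℝ → ℝ}

theorem copOf_eq_measureReal (hT : Measurable fun ω => (F1 (X 0 ω).1, F2 (X 0 ω).2))
    (u : ℝ × ℝ) :
    copOf X P F1 F2 u = (P.map fun ω => (F1 (X 0 ω).1, F2 (X 0 ω).2)).real (Iic u) := by
  rw [map_measureReal_apply hT measurableSet_Iic]
  rfl

theorem intCop_eq_integral (hT : Measurable fun ω => (F1 (X 0 ω).1, F2 (X 0 ω).2))
    {j : ℝ × ℝ → ℝ}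
    (hj : AEStronglyMeasurable j (P.map fun ω => (F1 (X 0 ω).1, F2 (X 0 ω).2))) :
    intCop X P F1 F2 j = ∫ v, j v ∂P.map fun ω => (F1 (X 0 ω).1, F2 (X 0 ω).2) :=
  (integral_map hT.aemeasurable hj).symm

end Sample

end Copula

open Copula in
theorem statement_6_general
    {Ω : Type*} [MeasurableSpace Ω] (P : Measure Ω) [IsProbabilityMeasure P]
    -- the i.i.d. bivariate sample
    (X : ℕ → Ω → ℝ × ℝ) (hXmeas : ∀ k, Measurable (X k))
    -- continuous margins and the copula C of the sample
    (F1 F2 : ℝ → ℝ)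
    (hm1 : ∀ t : ℝ, (P {ω | (X 0 ω).1 ≤ t}).toReal = F1 t)
    (hm2 : ∀ t : ℝ, (P {ω | (X 0 ω).2 ≤ t}).toReal = F2 t)
    -- j is continuous, of bounded variation in the Hardy–Krause sense, with
    -- induced signed measure μ on I and edge restrictions of bounded variation
    (j : ℝ × ℝ → ℝ)
    (μ : MeasureTheory.SignedMeasure (ℝ × ℝ))
    (hjμ : ∀ u ∈ Isq, j u = j (u.1, 0) + j (0, u.2) - j (0, 0) +
      μ (Ioc (0:ℝ) u.1 ×ˢ Ioc (0:ℝ) u.2))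
    (hjBV1 : BoundedVariationOn (fun t => j (t, 1)) (Icc (0:ℝ) 1))
    (hjBV2 : BoundedVariationOn (fun t => j (1, t)) (Icc (0:ℝ) 1)) :
    -- |∫_I j d(C_n - C)| ≤ 5 · sup_I |C_n - C| · ∫_I d|j|
    ∀ ω : Ω, ∀ n : ℕ, 1 ≤ n →
      |intCn X j n ω - intCop X P F1 F2 j| ≤
        5 * (⨆ u : Isq, |empCop X n ω (u : ℝ × ℝ) - copOf X P F1 F2 (u : ℝ × ℝ)|) *
          ((μ.totalVariation Isq).toReal +
            (eVariationOn (fun t => j (t, 1)) (Icc (0:ℝ) 1)).toReal +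
            (eVariationOn (fun t => j (1, t)) (Icc (0:ℝ) 1)).toReal) := by
  intro ω n hn
  have hT : Measurable fun ω => (F1 (X 0 ω).1, F2 (X 0 ω).2) :=
    ((monotone_of_measure_le_eq hm1).measurable.comp (hXmeas 0).fst).prodMk
      ((monotone_of_measure_le_eq hm2).measurable.comp (hXmeas 0).snd)
  set C := P.map fun ω => (F1 (X 0 ω).1, F2 (X 0 ω).2)
  have := Measure.isProbabilityMeasure_map (μ := P) hT.aemeasurable
  have hC : ∀ᵐ v ∂C, v ∈ Isq := (ae_map_iff hT.aemeasurable measurableSet_Isq).2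
    (ae_of_all _ fun ω => ⟨mem_Icc_of_measure_le_eq hm1 _, mem_Icc_of_measure_le_eq hm2 _⟩)
  set Cₙ := empiricalMeasure (pseudoObs X n ω) n
  have := isProbabilityMeasure_empiricalMeasure (pseudoObs X n ω) (Nat.one_le_iff_ne_zero.1 hn)
  have hCₙ : ∀ᵐ v ∂Cₙ, v ∈ Isq :=
    ae_empiricalMeasure_mem _ _ measurableSet_Isq (pseudoObs_mem_Isq X n ω)
  rw [intCn_eq_integral, intCop_eq_integral hT
    (integrable_of_hardyKrause hC hjμ hjBV1 hjBV2).aestronglyMeasurable]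
  simp only [empCop_eq_measureReal, copOf_eq_measureReal hT, mul_assoc]
  refine (abs_integral_sub_le_of_hardyKrause hCₙ hC
    (fun u hu => le_ciSup_abs_measureReal_sub (fun u : Isq => Iic (u : ℝ × ℝ)) ⟨u, hu⟩)
    hjμ hjBV1 hjBV2).trans (le_mul_of_one_le_left ?_ (by norm_num))
  exact mul_nonneg (Real.iSup_nonneg fun _ => abs_nonneg _) (by positivity)

open Copula in
theorem statement_6
    {d : ℕ} {Ω : Type*} [MeasurableSpace Ω] (P : Measure Ω) [IsProbabilityMeasure P]
    -- the i.i.d. bivariate sample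
    (X : ℕ → Ω → ℝ × ℝ) (hXmeas : ∀ k, Measurable (X k))
    (hindep : iIndepFun X P)
    (hident : ∀ k, Measure.map (X k) P = Measure.map (X 0) P)
    -- continuous margins and the copula C of the sample
    (F1 F2 : ℝ → ℝ) (hF1 : Continuous F1) (hF2 : Continuous F2)
    (hm1 : ∀ t : ℝ, (P {ω | (X 0 ω).1 ≤ t}).toReal = F1 t)
    (hm2 : ∀ t : ℝ, (P {ω | (X 0 ω).2 ≤ t}).toReal = F2 t)
    -- C is a copula: uniform margins
    (hcop : ∀ t ∈ Icc (0:ℝ) 1, copOf X P F1 F2 (t, 1) = t ∧ copOf X P F1 F2 (1, t) = t)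
    -- j is continuous, of bounded variation in the Hardy–Krause sense, with
    -- induced signed measure μ on I and edge restrictions of bounded variation
    (j : ℝ × ℝ → ℝ) (hjcont : ContinuousOn j Isq)
    (μ : MeasureTheory.SignedMeasure (ℝ × ℝ))
    (hjμ : ∀ u ∈ Isq, j u = j (u.1, 0) + j (0, u.2) - j (0, 0) +
      μ (Ioc (0:ℝ) u.1 ×ˢ Ioc (0:ℝ) u.2))
    (hjBV1 : BoundedVariationOn (fun t => j (t, 1)) (Icc (0:ℝ) 1))
    (hjBV2 : BoundedVariationOn (fun t => j (1, t)) (Icc (0:ℝ) 1)) :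
    -- |∫_I j d(C_n - C)| ≤ 5 · sup_I |C_n - C| · ∫_I d|j|
    ∀ ω : Ω, ∀ n : ℕ, 1 ≤ n →
      |intCn X j n ω - intCop X P F1 F2 j| ≤
        5 * (⨆ u : Isq, |empCop X n ω (u : ℝ × ℝ) - copOf X P F1 F2 (u : ℝ × ℝ)|) *
          ((μ.totalVariation Isq).toReal +
            (eVariationOn (fun t => j (t, 1)) (Icc (0:ℝ) 1)).toReal +
            (eVariationOn (fun t => j (1, t)) (Icc (0:ℝ) 1)).toReal) :=
  statement_6_general P X hXmeas F1 F2 hm1 hm2 j μ hjμ hjBV1 hjBV2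
end
end

section
/- Suppose θ_T = θ₀, i.e., c_{θ_T} ≡ 1 on I, that θ ↦ c_θ(u₁,u₂) is differentiable at θ₀ for λ-a.e. (u₁,u₂), that differentiation under the integral sign is justified for θ ↦ ∫_I φ'(1/c_θ) dλ and θ ↦ ∫_I c_θ dλ at θ₀ (so that ∫_I ċ_{θ₀} dλ = 0), and that φ is twice differentiable at 1. Then (∂/∂θ) m(θ₀,u₁,u₂) = φ''(1) · ċ_{θ₀}(u₁,u₂) for λ-a.e. (u₁,u₂), and consequently S := ∫_I φ''(1/c_{θ₀}) ( ċ_{θ₀} ċ_{θ₀}ᵀ / c_{θ₀}³ ) dλ = φ''(1) · I_{θ₀}, where I_{θ₀} := ∫_I ċ_{θ₀} ċ_{θ₀}ᵀ dλ is the Fisher information matrix of the copula model at the independence point. -/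
open MeasureTheory ProbabilityTheory Filter Set Asymptotics
open scoped Topology ENNReal NNReal

noncomputable section

/-!
At the independence point `1 / c_θ` has θ-derivative `-ċ`. Writing
`K₂ = h(1/c)` with `h(y) = y φ'(y) - φ(y)`, so that `h'(1) = φ''(1)`, the chain rule gives
`∂K₂ = -φ''(1) ċ` and `∂K₁ = -φ''(1) ċ` pointwise; the latter integrates to
`-φ''(1) ∫ ċ = 0`, so `∂m = φ''(1) ċ`. The identity for `S` is immediate from `c_{θ₀} = 1`.
-/

namespace Copula

section OneDimensional

variable {φ g : ℝ → ℝ} {a g' t : ℝ}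

theorem hasDerivAt_mul_deriv_sub {x : ℝ} (hφ : DifferentiableAt ℝ φ x)
    (hφ' : HasDerivAt (deriv φ) a x) :
    HasDerivAt (fun y => y * deriv φ y - φ y) (x * a) x :=
  (((hasDerivAt_id' x).mul hφ').sub hφ.hasDerivAt).congr_deriv (by ring)

theorem hasDerivAt_one_div_of_eq_one (hg : HasDerivAt g g' t) (hg1 : g t = 1) :
    HasDerivAt (fun s => 1 / g s) (-g') t := by
  simpa [one_div, hg1] using hg.fun_inv (by simp [hg1])

theorem hasDerivAt_deriv_comp_one_div (hφ' : HasDerivAt (deriv φ) a 1)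
    (hg : HasDerivAt g g' t) (hg1 : g t = 1) :
    HasDerivAt (fun s => deriv φ (1 / g s)) (a * -g') t :=
  hφ'.comp_of_eq t (hasDerivAt_one_div_of_eq_one hg hg1) (by simp [hg1])

theorem hasDerivAt_deriv_div_sub_comp_one_div (hφ : DifferentiableAt ℝ φ 1)
    (hφ' : HasDerivAt (deriv φ) a 1) (hg : HasDerivAt g g' t) (hg1 : g t = 1) :
    HasDerivAt (fun s => deriv φ (1 / g s) / g s - φ (1 / g s)) (a * -g') t := by
  have h := (hasDerivAt_mul_deriv_sub hφ hφ').comp_of_eq t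
    (hasDerivAt_one_div_of_eq_one hg hg1) (by simp [hg1])
  refine (h.congr_of_eventuallyEq (.of_forall fun s => ?_)).congr_deriv (by rw [one_mul])
  simp only [Function.comp_apply]
  ring

end OneDimensional

section IndependencePoint

variable {d : ℕ} {φ : ℝ → ℝ} {c : (Fin d → ℝ) → ℝ × ℝ → ℝ} {θ0 : Fin d → ℝ} {ℓ : Fin d}
  {a : ℝ}

theorem hasDerivAt_integral_K1_update_eq_zero {cdot : ℝ × ℝ → ℝ}
    (hφ' : HasDerivAt (deriv φ) a 1) (hθ0 : ∀ u ∈ Isq, c θ0 u = 1)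
    (hcder : ∀ᵐ u ∂(volume.restrict Isq),
      HasDerivAt (fun t => c (Function.update θ0 ℓ t) u) (cdot u) (θ0 ℓ))
    (hDUI : HasDerivAt (fun t => ∫ v in Isq, K1 φ c (Function.update θ0 ℓ t) v)
      (∫ v in Isq, deriv (fun t => K1 φ c (Function.update θ0 ℓ t) v) (θ0 ℓ)) (θ0 ℓ))
    (hzero : ∫ v in Isq, cdot v = 0) :
    HasDerivAt (fun t => ∫ v in Isq, K1 φ c (Function.update θ0 ℓ t) v) 0 (θ0 ℓ) := by
  have hderiv : ∀ᵐ v ∂(volume.restrict Isq),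
      deriv (fun t => K1 φ c (Function.update θ0 ℓ t) v) (θ0 ℓ) = a * -cdot v := by
    filter_upwards [hcder, ae_restrict_mem measurableSet_Isq] with v hv hvI
    exact (hasDerivAt_deriv_comp_one_div hφ' hv (by simp [hθ0 v hvI])).deriv
  rwa [integral_congr_ae hderiv, integral_const_mul, integral_neg, hzero, neg_zero,
    mul_zero] at hDUI

theorem pdθ_mFun_eq {u : ℝ × ℝ} {c' : ℝ} (hφ : DifferentiableAt ℝ φ 1)
    (hφ' : HasDerivAt (deriv φ) a 1)
    (hint : HasDerivAt (fun t => ∫ v in Isq, K1 φ c (Function.update θ0 ℓ t) v) 0 (θ0 ℓ))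
    (hu : c θ0 u = 1) (hcu : HasDerivAt (fun t => c (Function.update θ0 ℓ t) u) c' (θ0 ℓ)) :
    pdθ (fun θ => mFun φ c θ u) ℓ θ0 = a * c' :=
  (hint.sub (hasDerivAt_deriv_div_sub_comp_one_div hφ hφ' hcu (by simp [hu]))).deriv.trans
    (by ring)

end IndependencePoint

end Copula

open Copula in
theorem statement_9_general
    {d : ℕ}
    (φ : ℝ → ℝ)
    (c : (Fin d → ℝ) → ℝ × ℝ → ℝ)
    -- θ_T = θ₀: the independence copula, c_{θ₀} ≡ 1
    (θ0 : Fin d → ℝ) (hθ0 : ∀ u ∈ Isq, c θ0 u = 1)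
    -- θ ↦ c_θ(u) differentiable at θ₀ for λ-a.e. u, with gradient ċ_{θ₀}
    (cdot : ℝ × ℝ → Fin d → ℝ)
    (hcder : ∀ᵐ u ∂(volume.restrict Isq), ∀ ℓ : Fin d,
      HasDerivAt (fun t => c (Function.update θ0 ℓ t) u) (cdot u ℓ) (θ0 ℓ))
    -- φ is twice differentiable at 1
    (hφ2 : ContDiffAt ℝ 2 φ 1)
    -- differentiation under the integral sign at θ₀ for θ ↦ ∫ φ'(1/c_θ) dλ
    (hDUI1 : ∀ ℓ : Fin d,
      HasDerivAt (fun t => ∫ v in Isq, deriv φ (1 / c (Function.update θ0 ℓ t) v))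
        (∫ v in Isq, deriv (fun t => deriv φ (1 / c (Function.update θ0 ℓ t) v)) (θ0 ℓ))
        (θ0 ℓ))
    -- so that ∫ ċ_{θ₀} dλ = 0
    (hzero : ∀ ℓ : Fin d, (∫ v in Isq, cdot v ℓ) = 0) :
    -- (∂/∂θ)m(θ₀,·) = φ''(1) ċ_{θ₀} a.e., and S = φ''(1) I_{θ₀}
    (∀ᵐ u ∂(volume.restrict Isq), ∀ ℓ : Fin d,
      pdθ (fun θ => mFun φ c θ u) ℓ θ0 = deriv (deriv φ) 1 * cdot u ℓ) ∧
    (∀ ℓ ℓ' : Fin d,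
      (∫ u in Isq, deriv (deriv φ) (1 / c θ0 u) * (cdot u ℓ * cdot u ℓ' / (c θ0 u) ^ 3)) =
        deriv (deriv φ) 1 * ∫ u in Isq, cdot u ℓ * cdot u ℓ') := by
  have hφ : DifferentiableAt ℝ φ 1 := hφ2.differentiableAt (by norm_num)
  have hφ' : HasDerivAt (deriv φ) (deriv (deriv φ) 1) 1 :=
    ((hφ2.derivWithin (m := 1) (by norm_num)).differentiableAt (by norm_num)).hasDerivAt
  refine ⟨?_, fun ℓ ℓ' => ?_⟩
  · filter_upwards [hcder, ae_restrict_mem measurableSet_Isq] with u hu huI ℓ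
    exact pdθ_mFun_eq hφ hφ' (hasDerivAt_integral_K1_update_eq_zero hφ' hθ0
      (hcder.mono fun v hv => hv ℓ) (hDUI1 ℓ) (hzero ℓ)) (hθ0 u huI) (hu ℓ)
  · rw [← integral_const_mul]
    refine setIntegral_congr_fun measurableSet_Isq fun u hu => ?_
    simp [hθ0 u hu]

open Copula in
theorem statement_9
    {d : ℕ}
    -- the convex function φ, nonnegative with φ(1)=0, C² on the interior of its domain
    (φ : ℝ → ℝ) (Dom : Set ℝ) (hDomConv : Convex ℝ Dom) (h1Dom : 1 ∈ interior Dom)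
    (hφ1 : φ 1 = 0) (hφnonneg : ∀ x ∈ Dom, 0 ≤ φ x) (hφconv : ConvexOn ℝ Dom φ)
    (hφreg : ContDiffOn ℝ 2 φ (interior Dom))
    -- the parametric family of copula densities: positive, with uniform margins
    (c : (Fin d → ℝ) → ℝ × ℝ → ℝ) (hcpos : ∀ θ, ∀ u ∈ Isq, 0 < c θ u)
    (hmarg : ∀ θ, ∀ t ∈ Icc (0:ℝ) 1, copCdf c θ (t, 1) = t ∧ copCdf c θ (1, t) = t)
    -- θ_T = θ₀: the independence copula, c_{θ₀} ≡ 1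
    (θ0 : Fin d → ℝ) (hθ0 : ∀ u ∈ Isq, c θ0 u = 1)
    -- θ ↦ c_θ(u) differentiable at θ₀ for λ-a.e. u, with gradient ċ_{θ₀}
    (cdot : ℝ × ℝ → Fin d → ℝ)
    (hcder : ∀ᵐ u ∂(volume.restrict Isq), ∀ ℓ : Fin d,
      HasDerivAt (fun t => c (Function.update θ0 ℓ t) u) (cdot u ℓ) (θ0 ℓ))
    -- φ is twice differentiable at 1
    (hφ2 : ContDiffAt ℝ 2 φ 1)
    -- differentiation under the integral sign at θ₀ for θ ↦ ∫ φ'(1/c_θ) dλ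
    (hDUI1 : ∀ ℓ : Fin d,
      HasDerivAt (fun t => ∫ v in Isq, deriv φ (1 / c (Function.update θ0 ℓ t) v))
        (∫ v in Isq, deriv (fun t => deriv φ (1 / c (Function.update θ0 ℓ t) v)) (θ0 ℓ))
        (θ0 ℓ))
    -- differentiation under the integral sign at θ₀ for θ ↦ ∫ c_θ dλ
    (hDUI2 : ∀ ℓ : Fin d,
      HasDerivAt (fun t => ∫ v in Isq, c (Function.update θ0 ℓ t) v)
        (∫ v in Isq, cdot v ℓ) (θ0 ℓ))
    -- so that ∫ ċ_{θ₀} dλ = 0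
    (hzero : ∀ ℓ : Fin d, (∫ v in Isq, cdot v ℓ) = 0) :
    -- (∂/∂θ)m(θ₀,·) = φ''(1) ċ_{θ₀} a.e., and S = φ''(1) I_{θ₀}
    (∀ᵐ u ∂(volume.restrict Isq), ∀ ℓ : Fin d,
      pdθ (fun θ => mFun φ c θ u) ℓ θ0 = deriv (deriv φ) 1 * cdot u ℓ) ∧
    (∀ ℓ ℓ' : Fin d,
      (∫ u in Isq, deriv (deriv φ) (1 / c θ0 u) * (cdot u ℓ * cdot u ℓ' / (c θ0 u) ^ 3)) =
        deriv (deriv φ) 1 * ∫ u in Isq, cdot u ℓ * cdot u ℓ') :=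
  statement_9_general φ c θ0 hθ0 cdot hcder hφ2 hDUI1 hzero

end
end

section
/- Let σ > 0, D > 0, q > 0 and z ≥ 0 be real numbers, and set a := σ²z², b := qD and n₀ := ( (a+b) − √( a(a+2b) ) ) / (2D²). Then n₀ > 0 and √n₀ · ( q/(2n₀) − D ) / σ = z; equivalently, if z = Φ⁻¹(1−β) for β ∈ (0,1] with z ≥ 0 (Φ the standard normal cumulative distribution function), then n₀ is a root of the equation β = 1 − Φ( (√n/σ) ( q/(2n) − D ) ) in n. -/
open MeasureTheory ProbabilityTheory Filter Set Asymptotics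
open scoped Topology ENNReal NNReal

noncomputable section

/-- `√n₀`, written as the positive root `r` of `2 D² r² + 2 D √a r = b`; with `a = σ²z²` and
`b = qD` this is the equation `√n (q/(2n) - D) = σ z` cleared of denominators. -/
def sampleSizeRoot (a b D : ℝ) : ℝ := (√(a + 2 * b) - √a) / (2 * D)

theorem sampleSizeRoot_pos {a b D : ℝ} (ha : 0 ≤ a) (hb : 0 < b) (hD : 0 < D) :
    0 < sampleSizeRoot a b D :=
  div_pos (sub_pos.mpr (Real.sqrt_lt_sqrt ha (by linarith))) (by positivity)

theorem sampleSizeRoot_sq {a b D : ℝ} (ha : 0 ≤ a) (hb : 0 ≤ b) (hD : D ≠ 0) :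
    sampleSizeRoot a b D ^ 2 = ((a + b) - √(a * (a + 2 * b))) / (2 * D ^ 2) := by
  have hab : 0 ≤ a + 2 * b := by positivity
  rw [sampleSizeRoot, Real.sqrt_mul ha, div_pow, sub_sq, Real.sq_sqrt ha, Real.sq_sqrt hab]
  field_simp
  ring

theorem sampleSizeRoot_quadratic {a b D : ℝ} (ha : 0 ≤ a) (hb : 0 ≤ b) (hD : D ≠ 0) :
    2 * D ^ 2 * sampleSizeRoot a b D ^ 2 + 2 * D * √a * sampleSizeRoot a b D = b := by
  have hroot : 2 * D * sampleSizeRoot a b D + √a = √(a + 2 * b) := by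
    rw [sampleSizeRoot]; field_simp; ring
  have hsq := congrArg (· ^ 2) hroot
  simp only [Real.sq_sqrt (by positivity : 0 ≤ a + 2 * b), add_sq, Real.sq_sqrt ha] at hsq
  linear_combination hsq / 2

theorem mul_div_sq_sub_eq_of_quadratic {r D q c : ℝ} (hr : r ≠ 0)
    (h : 2 * D * r ^ 2 + 2 * c * r = q) : r * (q / (2 * r ^ 2) - D) = c := by
  subst h
  field_simp
  ring

end

theorem statement_15 (σ D q z a b n₀ : ℝ)
    (hσ : 0 < σ) (hD : 0 < D) (hq : 0 < q) (hz : 0 ≤ z)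
    (ha : a = σ ^ 2 * z ^ 2) (hb : b = q * D)
    (hn₀ : n₀ = ((a + b) - Real.sqrt (a * (a + 2 * b))) / (2 * D ^ 2)) :
    0 < n₀ ∧
    Real.sqrt n₀ * (q / (2 * n₀) - D) / σ = z ∧
    ∀ β ∈ Set.Ioc (0:ℝ) 1,
      cdf (gaussianReal 0 1) z = 1 - β →
      β = 1 - cdf (gaussianReal 0 1) (Real.sqrt n₀ / σ * (q / (2 * n₀) - D)) := by
  have ha₀ : 0 ≤ a := by rw [ha]; positivity
  have hb₀ : 0 < b := by rw [hb]; positivity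
  have hsqrt_a : √a = σ * z := by
    rw [ha, ← mul_pow, Real.sqrt_sq (by positivity)]
  set r := sampleSizeRoot a b D
  have hr : 0 < r := sampleSizeRoot_pos ha₀ hb₀ hD
  have hn₀r : n₀ = r ^ 2 := by rw [hn₀, sampleSizeRoot_sq ha₀ hb₀.le hD.ne']
  have hsqrt_n₀ : √n₀ = r := by rw [hn₀r, Real.sqrt_sq hr.le]
  have hquad : 2 * D * r ^ 2 + 2 * (σ * z) * r = q := by
    have h := sampleSizeRoot_quadratic ha₀ hb₀.le hD.ne'
    rw [hsqrt_a] at h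
    exact mul_left_cancel₀ hD.ne' (by linear_combination h + hb)
  have heq : √n₀ * (q / (2 * n₀) - D) / σ = z := by
    rw [hsqrt_n₀, hn₀r, mul_div_sq_sub_eq_of_quadratic hr.ne' hquad]
    field_simp
  refine ⟨by rw [hn₀r]; positivity, heq, fun β _ hβ => ?_⟩
  rw [div_mul_eq_mul_div, heq, hβ]
  ring
end
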